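/- If R is a local commutative ring, then the ring R((t))^√ of formal Laurent series over R whose negative-degree coefficients are nilpotent is a local ring, with maximal ideal the set of series whose constant coefficient lies in the maximal ideal of R. (This is the key fact [KV04, Corollary 1.3.2] underlying the construction of the formal loop space as an ind-scheme of local-ring-valued points.) -/

import Mathlib

/-!
Every `f ∈ R((t))^√` splits as `f = f⁻ + f⁺`, where `f⁻ = ∑_{i<0} fᵢ tⁱ` is a finite sum of
nilpotent monomials, hence nilpotent, and `f⁺` is a power series with constant term `f₀`. If `f₀`
is a unit, so is `f⁺` in `R[[t]]`, and then so is the nilpotent perturbation `f`. Conversely, the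
same splitting shows `(f g)₀ ≡ f₀ g₀` modulo nilpotents, so `f g = 1` forces `f₀` to be a unit.
Hence `f` is a unit exactly when `f₀` is, and locality of `R` transfers to `R((t))^√`.
-/

/-- `R((t))^√`: the subring of `R((t))` consisting of Laurent series all of whose
coefficients in strictly negative degrees are nilpotent. -/
def sqrtLaurentSubring (R : Type*) [CommRing R] : Subring (LaurentSeries R) where
  carrier := {f | ∀ i : ℤ, i < 0 → IsNilpotent (f.coeff i)}
  zero_mem' := by
    intro i _
    simp [HahnSeries.coeff_zero]
  one_mem' := by
    intro i hi
    rw [HahnSeries.coeff_one, if_neg (by omega)]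
    exact IsNilpotent.zero
  add_mem' := by
    intro f g hf hg i hi
    rw [HahnSeries.coeff_add]
    exact Commute.isNilpotent_add (Commute.all _ _) (hf i hi) (hg i hi)
  neg_mem' := by
    intro f hf i hi
    rw [HahnSeries.coeff_neg]
    exact (hf i hi).neg
  mul_mem' := by
    intro f g hf hg i hi
    rw [HahnSeries.coeff_mul]
    refine isNilpotent_sum fun ij hij => ?_
    rw [Finset.mem_addAntidiagonal] at hij
    rcases lt_or_ge ij.1 0 with h1 | h1
    · exact (Commute.all _ _).isNilpotent_mul_right (hf ij.1 h1)
    · have h2 : ij.2 < 0 := by omega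
      exact (Commute.all _ _).isNilpotent_mul_left (hg ij.2 h2)

namespace HahnSeries

variable {Γ R : Type*} [AddCommMonoid Γ] [PartialOrder Γ] [IsOrderedCancelAddMonoid Γ]
  [CommSemiring R]

theorem isNilpotent_of_support_finite {x : HahnSeries Γ R} (hfin : x.support.Finite)
    (hnil : ∀ i, IsNilpotent (x.coeff i)) : IsNilpotent x := by
  classical
  have hx : x = ∑ i ∈ hfin.toFinset, single i (x.coeff i) := by
    ext g
    rw [coeff_sum, Finset.sum_eq_single g (fun i _ hi => coeff_single_of_ne hi.symm)]
    · simp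
    · simp_all
  rw [hx]
  refine isNilpotent_sum fun i _ => ?_
  obtain ⟨n, hn⟩ := hnil i
  exact ⟨n, by rw [single_pow, hn, single_eq_zero]⟩

theorem isNilpotent_coeff_mul_of_forall_isNilpotent_coeff {x : HahnSeries Γ R}
    (hx : ∀ i, IsNilpotent (x.coeff i)) (y : HahnSeries Γ R) (g : Γ) :
    IsNilpotent ((x * y).coeff g) := by
  rw [coeff_mul]
  exact isNilpotent_sum fun ij _ => (Commute.all _ _).isNilpotent_mul_right (hx ij.1)

end HahnSeries

namespace LaurentSeries

open HahnSeries

variable {R : Type*} [CommRing R]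

def nonnegPart (f : LaurentSeries R) : PowerSeries R :=
  PowerSeries.mk fun n => f.coeff n

theorem truncLT_add_nonnegPart (f : LaurentSeries R) :
    truncLT 0 f + (f.nonnegPart : LaurentSeries R) = f := by
  ext i
  rw [coeff_add, HahnSeries.coeff_truncLT, PowerSeries.coeff_coe]
  split_ifs with hi
  · rw [add_zero]
  · rw [zero_add, nonnegPart, PowerSeries.coeff_mk, Int.natAbs_of_nonneg (not_lt.1 hi)]

theorem constantCoeff_nonnegPart (f : LaurentSeries R) :
    PowerSeries.constantCoeff f.nonnegPart = f.coeff 0 := by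
  simp [nonnegPart]

end LaurentSeries

open HahnSeries LaurentSeries

section sqrtLaurentSubring

variable {R : Type*} [CommRing R]

theorem coe_mem_sqrtLaurentSubring (p : PowerSeries R) :
    (p : LaurentSeries R) ∈ sqrtLaurentSubring R := fun i hi => by
  rw [PowerSeries.coeff_coe, if_pos hi]
  exact .zero

variable {f g : LaurentSeries R}

theorem isNilpotent_coeff_truncLT_zero (hf : f ∈ sqrtLaurentSubring R) (i : ℤ) :
    IsNilpotent ((truncLT 0 f).coeff i) := by
  rw [HahnSeries.coeff_truncLT]
  split_ifs with hi
  exacts [hf i hi, .zero]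

theorem isNilpotent_truncLT_zero (hf : f ∈ sqrtLaurentSubring R) : IsNilpotent (truncLT 0 f) := by
  refine isNilpotent_of_support_finite ((Set.finite_Ico f.order 0).subset ?_)
    (isNilpotent_coeff_truncLT_zero hf)
  rw [support_truncLT]
  rintro i ⟨hi, hneg⟩
  exact ⟨order_le_of_coeff_ne_zero hi, hneg⟩

theorem isNilpotent_coeff_zero_mul_sub (hf : f ∈ sqrtLaurentSubring R)
    (hg : g ∈ sqrtLaurentSubring R) :
    IsNilpotent ((f * g).coeff 0 - f.coeff 0 * g.coeff 0) := by
  have hfg : f * g = truncLT 0 f * g + truncLT 0 g * f.nonnegPart +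
      ((f.nonnegPart * g.nonnegPart : PowerSeries R) : LaurentSeries R) := by
    rw [map_mul]
    linear_combination (-g) * truncLT_add_nonnegPart f
      - (f.nonnegPart : LaurentSeries R) * truncLT_add_nonnegPart g
  have hpq : ((f.nonnegPart * g.nonnegPart : PowerSeries R) : LaurentSeries R).coeff 0 =
      f.coeff 0 * g.coeff 0 := by
    rw [PowerSeries.coeff_coe, if_neg (lt_irrefl 0), Int.natAbs_zero,
      PowerSeries.coeff_zero_eq_constantCoeff_apply, map_mul, constantCoeff_nonnegPart,
      constantCoeff_nonnegPart]
  rw [hfg, coeff_add, coeff_add, hpq, add_sub_cancel_right]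
  exact (Commute.all _ _).isNilpotent_add
    (isNilpotent_coeff_mul_of_forall_isNilpotent_coeff (isNilpotent_coeff_truncLT_zero hf) _ _)
    (isNilpotent_coeff_mul_of_forall_isNilpotent_coeff (isNilpotent_coeff_truncLT_zero hg) _ _)

theorem isUnit_coeff_zero_of_mul_eq_one (hf : f ∈ sqrtLaurentSubring R)
    (hg : g ∈ sqrtLaurentSubring R) (hfg : f * g = 1) : IsUnit (f.coeff 0) := by
  have h := (isNilpotent_coeff_zero_mul_sub hf hg).isUnit_one_sub
  rw [hfg, coeff_one, if_pos rfl, sub_sub_cancel] at h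
  exact isUnit_of_mul_isUnit_left h

theorem isUnit_of_isUnit_coeff_zero {f : sqrtLaurentSubring R}
    (h : IsUnit ((f : LaurentSeries R).coeff 0)) : IsUnit f := by
  let ι : PowerSeries R →+* sqrtLaurentSubring R :=
    (ofPowerSeries ℤ R).codRestrict _ coe_mem_sqrtLaurentSubring
  let n : sqrtLaurentSubring R := ⟨truncLT 0 f, fun i _ => isNilpotent_coeff_truncLT_zero f.2 i⟩
  have hn : IsNilpotent n :=
    (IsNilpotent.map_iff (Subring.subtype_injective _)).1 (isNilpotent_truncLT_zero f.2)
  have hp : IsUnit (ι (f : LaurentSeries R).nonnegPart) :=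
    (PowerSeries.isUnit_iff_constantCoeff.2 (by rwa [constantCoeff_nonnegPart])).map ι
  have hf : f = ι (f : LaurentSeries R).nonnegPart + n :=
    Subtype.ext ((truncLT_add_nonnegPart _).symm.trans (add_comm _ _))
  rw [hf]
  exact hn.isUnit_add_left_of_commute hp (Commute.all _ _)

theorem isUnit_iff_isUnit_coeff_zero (f : sqrtLaurentSubring R) :
    IsUnit f ↔ IsUnit ((f : LaurentSeries R).coeff 0) := by
  refine ⟨fun hf => ?_, isUnit_of_isUnit_coeff_zero⟩
  obtain ⟨g, hfg⟩ := hf.exists_right_inv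
  exact isUnit_coeff_zero_of_mul_eq_one f.2 g.2 congr(Subtype.val $hfg)

end sqrtLaurentSubring

/-- [KV04, Corollary 1.3.2]: if `R` is a local commutative ring, then `R((t))^√` is a
local ring, and its maximal ideal is the set of series whose constant coefficient lies in
the maximal ideal of `R`. -/
theorem isLocalRing_sqrtLaurent (R : Type*) [CommRing R] [IsLocalRing R] :
    IsLocalRing (sqrtLaurentSubring R) ∧
    ∀ I : Ideal (sqrtLaurentSubring R), I.IsMaximal →
      ∀ f : sqrtLaurentSubring R,
        f ∈ I ↔ (f : LaurentSeries R).coeff 0 ∈ IsLocalRing.maximalIdeal R := by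
  have hloc : IsLocalRing (sqrtLaurentSubring R) :=
    .of_isUnit_or_isUnit_one_sub_self fun a => by
      simp only [isUnit_iff_isUnit_coeff_zero, AddSubgroupClass.coe_sub, OneMemClass.coe_one,
        coeff_sub, coeff_one, if_pos]
      exact IsLocalRing.isUnit_or_isUnit_one_sub_self _
  refine ⟨hloc, fun I hI f => ?_⟩
  rw [IsLocalRing.eq_maximalIdeal hI, IsLocalRing.mem_maximalIdeal,
    IsLocalRing.mem_maximalIdeal, mem_nonunits_iff, mem_nonunits_iff,
    isUnit_iff_isUnit_coeff_zero]
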